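/- arXiv:2211.09709 — 5 statements merged into one kernel-verified Lean document; each statement's English description precedes it below -/
import Mathlib

section
/- For positive reals a₁,…,aₘ (m ≥ 1) and b₁,…,bₙ (n ≥ 1), the hypervolume f satisfies the recurrence f(a₁,…,aₘ; b₁,…,bₙ) = (a₁/(a₁+b₁))·f(a₁,…,aₘ; b₂,…,bₙ) + (b₁/(a₁+b₁))·f(a₂,…,aₘ; b₁,…,bₙ). -/
/-!
Split off the first coordinates `x₁, y₁` and fix the others. With `R = ∏_{i ≥ 2} xᵢ^{aᵢ}`,
`S = ∏_{j ≥ 2} yⱼ^{bⱼ}`, `A = a₁`, `B = b₁`, Fubini reduces the recurrence to the planar identity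
`λ{(u, v) ∈ [0,1]² | u^A R < v^B S}
  = A/(A+B) · λ{u ∈ [0,1] | u^A R < S} + B/(A+B) · λ{v ∈ [0,1] | R < v^B S}`.
For fixed `u` the `v`-slice has measure `1 - (u^A R / S)^{1/B}`, so the left side is
`∫₀¹ (1 - C u^{A/B})⁺ du` with `C = (R/S)^{1/B}`; computing it separately for `R ≤ S`
(integrand nonnegative, `C ≤ 1`) and `R > S` (integrand vanishes past `(S/R)^{1/A}`)
gives the right side.
-/

open MeasureTheory

section Shuffle

variable {α β γ δ : Type*}
  [MeasureSpace α] [MeasureSpace β] [MeasureSpace γ] [MeasureSpace δ]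
  [SFinite (volume : Measure α)] [SFinite (volume : Measure β)]
  [SFinite (volume : Measure γ)] [SFinite (volume : Measure δ)]

theorem volume_preserving_prod_left_comm :
    MeasurePreserving (fun p : α × β × γ => (p.2.1, p.1, p.2.2)) volume volume :=
  volume_preserving_prodAssoc.comp <|
    (Measure.measurePreserving_swap.prod (.id _)).comp <|
      volume_preserving_prodAssoc.symm MeasurableEquiv.prodAssoc

theorem volume_preserving_prod_prod_prod_comm :
    MeasurePreserving (fun p : (α × β) × γ × δ => ((p.1.1, p.2.1), p.1.2, p.2.2))
      volume volume :=
  (volume_preserving_prodAssoc.symm MeasurableEquiv.prodAssoc).comp <|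
    ((MeasurePreserving.id _).prod volume_preserving_prod_left_comm).comp
      volume_preserving_prodAssoc

end Shuffle

theorem measurable_fin_cons {α : Type*} [MeasurableSpace α] {k : ℕ} :
    Measurable fun p : α × (Fin k → α) => (Fin.cons p.1 p.2 : Fin (k + 1) → α) :=
  measurable_pi_iff.2 fun i =>
    Fin.cases measurable_fst (fun j => (measurable_pi_apply j).comp measurable_snd) i

theorem volume_preserving_fin_cons (α : Type*) [MeasureSpace α]
    [SigmaFinite (volume : Measure α)] (k : ℕ) :
    MeasurePreserving (fun p : α × (Fin k → α) => (Fin.cons p.1 p.2 : Fin (k + 1) → α))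
      volume volume := by
  have h := (volume_preserving_piFinSuccAbove (fun _ : Fin (k + 1) => α) 0).symm
  have hcons : ⇑(MeasurableEquiv.piFinSuccAbove (fun _ : Fin (k + 1) => α) 0).symm =
      fun p : α × (Fin k → α) => (Fin.cons p.1 p.2 : Fin (k + 1) → α) := by
    funext p
    simp [MeasurableEquiv.piFinSuccAbove_symm_apply, Fin.consEquiv]
  rwa [hcons] at h

section FinConsSlices

variable {α β X Y : Type*}
  [MeasureSpace α] [MeasureSpace β] [MeasureSpace X] [MeasureSpace Y]
  [SigmaFinite (volume : Measure α)] [SigmaFinite (volume : Measure β)]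
  [SigmaFinite (volume : Measure X)] [SigmaFinite (volume : Measure Y)] {m n : ℕ}

theorem volume_eq_lintegral_volume_fin_cons_fin_cons
    {S : Set ((Fin (m + 1) → α) × (Fin (n + 1) → β))} (hS : MeasurableSet S) :
    volume S = ∫⁻ z : (Fin m → α) × (Fin n → β), volume {p : α × β |
      ((Fin.cons p.1 z.1 : Fin (m + 1) → α), (Fin.cons p.2 z.2 : Fin (n + 1) → β)) ∈ S} := by
  have hψ := ((volume_preserving_fin_cons α m).prod (volume_preserving_fin_cons β n)).comp
    (volume_preserving_prod_prod_prod_comm (α := α) (β := β) (γ := Fin m → α) (δ := Fin n → β))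
  rw [Measure.volume_eq_prod, ← hψ.measure_preimage hS.nullMeasurableSet,
    Measure.volume_eq_prod, Measure.prod_apply_symm (hψ.measurable hS)]
  rfl

theorem volume_eq_lintegral_volume_fin_cons_left {S : Set ((Fin (m + 1) → α) × Y)}
    (hS : MeasurableSet S) :
    volume S = ∫⁻ z : (Fin m → α) × Y,
      volume {u : α | ((Fin.cons u z.1 : Fin (m + 1) → α), z.2) ∈ S} := by
  have hψ := ((volume_preserving_fin_cons α m).prod (.id (volume : Measure Y))).comp
    (volume_preserving_prodAssoc.symm (MeasurableEquiv.prodAssoc (α := α) (β := Fin m → α)))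
  rw [Measure.volume_eq_prod, ← hψ.measure_preimage hS.nullMeasurableSet,
    Measure.volume_eq_prod, Measure.prod_apply_symm (hψ.measurable hS)]
  rfl

theorem volume_eq_lintegral_volume_fin_cons_right {S : Set (X × (Fin (n + 1) → β))}
    (hS : MeasurableSet S) :
    volume S = ∫⁻ z : X × (Fin n → β),
      volume {v : β | (z.1, (Fin.cons v z.2 : Fin (n + 1) → β)) ∈ S} := by
  have hψ := ((MeasurePreserving.id (volume : Measure X)).prod
    (volume_preserving_fin_cons β n)).comp
      (volume_preserving_prod_left_comm (α := β) (β := X) (γ := Fin n → β))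
  rw [Measure.volume_eq_prod, ← hψ.measure_preimage hS.nullMeasurableSet,
    Measure.volume_eq_prod, Measure.prod_apply_symm (hψ.measurable hS)]
  rfl

end FinConsSlices

theorem measurable_volume_setOf_fin_cons_left {α Y : Type*} [MeasureSpace α]
    [SFinite (volume : Measure α)] [MeasurableSpace Y] {m : ℕ} {S : Set ((Fin (m + 1) → α) × Y)}
    (hS : MeasurableSet S) :
    Measurable fun z : (Fin m → α) × Y =>
      volume {u : α | ((Fin.cons u z.1 : Fin (m + 1) → α), z.2) ∈ S} := by
  have hcons : Measurable fun q : α × (Fin m → α) × Y =>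
      ((Fin.cons q.1 q.2.1 : Fin (m + 1) → α), q.2.2) :=
    (measurable_fin_cons.comp (measurable_fst.prodMk measurable_snd.fst)).prodMk
      measurable_snd.snd
  exact measurable_measure_prodMk_right (hcons hS)

section Planar

open Set

variable {A B C γ r s : ℝ}

theorem volume_setOf_mem_Icc_lt_rpow_mul (hB : 0 < B) (hs : 0 < s) (hr : 0 ≤ r) :
    volume {v : ℝ | v ∈ Icc 0 1 ∧ r < v ^ B * s} = ENNReal.ofReal (1 - (r / s) ^ B⁻¹) := by
  have hrs : 0 ≤ r / s := div_nonneg hr hs.le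
  have hset : {v : ℝ | v ∈ Icc 0 1 ∧ r < v ^ B * s} = Ioc ((r / s) ^ B⁻¹) 1 := by
    ext v
    simp only [mem_ofPred_eq, mem_Icc, mem_Ioc]
    constructor
    · rintro ⟨⟨hv0, hv1⟩, hlt⟩
      rw [Real.rpow_inv_lt_iff_of_pos hrs hv0 hB, div_lt_iff₀ hs]
      exact ⟨hlt, hv1⟩
    · rintro ⟨hlt, hv1⟩
      have hv0 : 0 ≤ v := (Real.rpow_nonneg hrs _).trans hlt.le
      rw [Real.rpow_inv_lt_iff_of_pos hrs hv0 hB, div_lt_iff₀ hs] at hlt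
      exact ⟨⟨hv0, hv1⟩, hlt⟩
  rw [hset, Real.volume_Ioc]

theorem volume_setOf_mem_Icc_rpow_mul_lt_of_le (hA : 0 < A) (hs : 0 < s) (hrs : r ≤ s) :
    volume {u : ℝ | u ∈ Icc 0 1 ∧ u ^ A * r < s} = 1 := by
  refine le_antisymm ?_ ?_
  · calc volume {u : ℝ | u ∈ Icc 0 1 ∧ u ^ A * r < s} ≤ volume (Icc (0 : ℝ) 1) :=
          measure_mono fun u hu => hu.1
      _ = 1 := by simp
  · calc (1 : ENNReal) = volume (Ico (0 : ℝ) 1) := by simp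
      _ ≤ _ := measure_mono fun u ⟨hu0, hu1⟩ => by
          have hpow : u ^ A < 1 := Real.rpow_lt_one hu0 hu1 hA
          exact ⟨⟨hu0, hu1.le⟩, by nlinarith [Real.rpow_nonneg hu0 A]⟩

theorem volume_setOf_mem_Icc_rpow_mul_lt_of_lt (hA : 0 < A) (hs : 0 ≤ s) (hsr : s < r) :
    volume {u : ℝ | u ∈ Icc 0 1 ∧ u ^ A * r < s} = ENNReal.ofReal ((s / r) ^ A⁻¹) := by
  have hr : 0 < r := hs.trans_lt hsr
  have hsr' : 0 ≤ s / r := div_nonneg hs hr.le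
  have hset : {u : ℝ | u ∈ Icc 0 1 ∧ u ^ A * r < s} = Ico 0 ((s / r) ^ A⁻¹) := by
    ext u
    simp only [mem_ofPred_eq, mem_Icc, mem_Ico]
    constructor
    · rintro ⟨⟨hu0, -⟩, hlt⟩
      rw [Real.lt_rpow_inv_iff_of_pos hu0 hsr' hA, lt_div_iff₀ hr]
      exact ⟨hu0, hlt⟩
    · rintro ⟨hu0, hlt⟩
      have hu1 : u ≤ 1 := hlt.le.trans <| Real.rpow_le_one hsr'
        ((div_le_one hr).2 hsr.le) (inv_nonneg.2 hA.le)
      rw [Real.lt_rpow_inv_iff_of_pos hu0 hsr' hA, lt_div_iff₀ hr] at hlt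
      exact ⟨⟨hu0, hu1⟩, hlt⟩
  rw [hset, Real.volume_Ico, sub_zero]

theorem integral_one_sub_mul_rpow (hγ : 0 < γ) (t : ℝ) :
    ∫ u in (0 : ℝ)..t, (1 - C * u ^ γ) = t - C * t ^ (γ + 1) / (γ + 1) := by
  rw [intervalIntegral.integral_sub intervalIntegrable_const
      ((intervalIntegral.intervalIntegrable_rpow (Or.inl hγ.le)).const_mul C),
    intervalIntegral.integral_const, intervalIntegral.integral_const_mul,
    integral_rpow (Or.inl (by linarith)), Real.zero_rpow (by linarith)]
  simp only [sub_zero, smul_eq_mul, mul_one]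
  ring

theorem setLIntegral_Icc_ofReal_one_sub_mul_rpow (hγ : 0 < γ) {t : ℝ} (ht : 0 ≤ t)
    (hpos : ∀ u ∈ Icc 0 t, 0 ≤ 1 - C * u ^ γ) :
    ∫⁻ u in Icc 0 t, ENNReal.ofReal (1 - C * u ^ γ) =
      ENNReal.ofReal (t - C * t ^ (γ + 1) / (γ + 1)) := by
  have hint : IntegrableOn (fun u : ℝ => 1 - C * u ^ γ) (Icc 0 t) :=
    (continuous_const.sub
      (continuous_const.mul (Real.continuous_rpow_const hγ.le))).integrableOn_Icc
  rw [← ofReal_integral_eq_lintegral_ofReal hint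
      ((ae_restrict_iff' measurableSet_Icc).2 (Filter.Eventually.of_forall hpos)),
    integral_Icc_eq_integral_Ioc, ← intervalIntegral.integral_of_le ht,
    integral_one_sub_mul_rpow hγ]

theorem setLIntegral_Icc_ofReal_one_sub_mul_rpow_of_le_one (hγ : 0 < γ) (hC0 : 0 ≤ C)
    (hC1 : C ≤ 1) :
    ∫⁻ u in Icc 0 1, ENNReal.ofReal (1 - C * u ^ γ) = ENNReal.ofReal (1 - C / (γ + 1)) := by
  rw [setLIntegral_Icc_ofReal_one_sub_mul_rpow hγ zero_le_one, Real.one_rpow, mul_one]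
  intro u hu
  nlinarith [Real.rpow_le_one hu.1 hu.2 hγ.le, Real.rpow_nonneg hu.1 γ]

theorem setLIntegral_Icc_ofReal_one_sub_mul_rpow_of_mul_rpow_eq_one (hγ : 0 < γ) (hC : 0 ≤ C)
    {u₀ : ℝ} (hu₀ : u₀ ∈ Icc 0 1) (hCu₀ : C * u₀ ^ γ = 1) :
    ∫⁻ u in Icc 0 1, ENNReal.ofReal (1 - C * u ^ γ) = ENNReal.ofReal (u₀ * (γ / (γ + 1))) := by
  have hCpos : 0 < C := hC.lt_of_ne (by rintro rfl; simp at hCu₀)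
  have hle_one_iff : ∀ u, 0 ≤ u → (C * u ^ γ ≤ 1 ↔ u ≤ u₀) := fun u hu => by
    rw [← hCu₀, mul_le_mul_iff_right₀ hCpos, Real.rpow_le_rpow_iff hu hu₀.1 hγ]
  rw [← Icc_union_Ioc_eq_Icc hu₀.1 hu₀.2,
    lintegral_union measurableSet_Ioc ((Iic_disjoint_Ioc le_rfl).mono_left Icc_subset_Iic_self),
    setLIntegral_Icc_ofReal_one_sub_mul_rpow hγ hu₀.1
      fun u hu => sub_nonneg.2 ((hle_one_iff u hu.1).2 hu.2),
    setLIntegral_congr_fun measurableSet_Ioc fun u hu => ENNReal.ofReal_eq_zero.2 <|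
      sub_nonpos.2 (not_le.1 (mt (hle_one_iff u (hu₀.1.trans hu.1.le)).1 (not_le.2 hu.1))).le,
    lintegral_zero, add_zero, Real.rpow_add_one' hu₀.1 (by linarith), ← mul_assoc, hCu₀]
  congr 1
  field_simp
  ring

theorem volume_unitSquare_rpow_mul_lt_eq_setLIntegral (hB : 0 < B) (hs : 0 < s)
    (hr : 0 ≤ r) :
    volume {p : ℝ × ℝ | p.1 ∈ Icc 0 1 ∧ p.2 ∈ Icc 0 1 ∧ p.1 ^ A * r < p.2 ^ B * s} =
      ∫⁻ u in Icc 0 1, ENNReal.ofReal (1 - (r / s) ^ B⁻¹ * u ^ (A / B)) := by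
  have hmeas : MeasurableSet
      {p : ℝ × ℝ | p.1 ∈ Icc 0 1 ∧ p.2 ∈ Icc 0 1 ∧ p.1 ^ A * r < p.2 ^ B * s} :=
    (measurableSet_Icc.preimage measurable_fst).inter <|
      (measurableSet_Icc.preimage measurable_snd).inter <|
        measurableSet_lt ((measurable_fst.pow_const A).mul_const r)
          ((measurable_snd.pow_const B).mul_const s)
  rw [Measure.volume_eq_prod, Measure.prod_apply hmeas, ← lintegral_indicator measurableSet_Icc]
  refine lintegral_congr fun u => ?_
  by_cases hu : u ∈ Icc (0 : ℝ) 1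
  · have hslice : Prod.mk u ⁻¹'
        {p : ℝ × ℝ | p.1 ∈ Icc 0 1 ∧ p.2 ∈ Icc 0 1 ∧ p.1 ^ A * r < p.2 ^ B * s} =
        {v : ℝ | v ∈ Icc 0 1 ∧ u ^ A * r < v ^ B * s} := by
      ext v
      simp only [mem_preimage, mem_ofPred_eq, hu, true_and]
    rw [indicator_of_mem hu, hslice,
      volume_setOf_mem_Icc_lt_rpow_mul hB hs (mul_nonneg (Real.rpow_nonneg hu.1 _) hr),
      mul_div_assoc, Real.mul_rpow (Real.rpow_nonneg hu.1 _) (div_nonneg hr hs.le),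
      ← Real.rpow_mul hu.1, mul_comm, div_eq_mul_inv A]
  · rw [indicator_of_notMem hu]
    convert measure_empty (μ := (volume : Measure ℝ))
    ext v
    simp only [mem_preimage, mem_ofPred_eq, hu, false_and, mem_empty_iff_false]

theorem volume_unitSquare_rpow_mul_lt (hA : 0 < A) (hB : 0 < B) (hr : 0 ≤ r) (hs : 0 ≤ s) :
    volume {p : ℝ × ℝ | p.1 ∈ Icc 0 1 ∧ p.2 ∈ Icc 0 1 ∧ p.1 ^ A * r < p.2 ^ B * s} =
      ENNReal.ofReal (A / (A + B)) * volume {u : ℝ | u ∈ Icc 0 1 ∧ u ^ A * r < s} +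
        ENNReal.ofReal (B / (A + B)) * volume {v : ℝ | v ∈ Icc 0 1 ∧ r < v ^ B * s} := by
  rcases hs.eq_or_lt with rfl | hs
  · have hnonneg : ∀ u ∈ Icc (0 : ℝ) 1, 0 ≤ u ^ A * r := fun u hu =>
      mul_nonneg (Real.rpow_nonneg hu.1 _) hr
    simp only [mul_zero]
    have hW : {p : ℝ × ℝ | p.1 ∈ Icc 0 1 ∧ p.2 ∈ Icc 0 1 ∧ p.1 ^ A * r < 0} = ∅ :=
      eq_empty_of_forall_notMem fun p hp => not_lt.2 (hnonneg p.1 hp.1) hp.2.2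
    have hU : {u : ℝ | u ∈ Icc 0 1 ∧ u ^ A * r < 0} = ∅ :=
      eq_empty_of_forall_notMem fun u hu => not_lt.2 (hnonneg u hu.1) hu.2
    have hV : {v : ℝ | v ∈ Icc 0 1 ∧ r < 0} = ∅ :=
      eq_empty_of_forall_notMem fun v hv => not_lt.2 hr hv.2
    rw [hW, hU, hV]
    simp
  have hγ : 0 < A / B := div_pos hA hB
  have hC : 0 ≤ (r / s) ^ B⁻¹ := Real.rpow_nonneg (div_nonneg hr hs.le) _
  rw [volume_unitSquare_rpow_mul_lt_eq_setLIntegral hB hs hr,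
    volume_setOf_mem_Icc_lt_rpow_mul hB hs hr]
  rcases le_or_gt r s with hrs | hsr
  · have hC1 : (r / s) ^ B⁻¹ ≤ 1 := Real.rpow_le_one (div_nonneg hr hs.le)
      ((div_le_one hs).2 hrs) (inv_nonneg.2 hB.le)
    rw [setLIntegral_Icc_ofReal_one_sub_mul_rpow_of_le_one hγ hC hC1,
      volume_setOf_mem_Icc_rpow_mul_lt_of_le hA hs hrs, mul_one,
      ← ENNReal.ofReal_mul (by positivity), ← ENNReal.ofReal_add (by positivity)
        (mul_nonneg (by positivity) (sub_nonneg.2 hC1))]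
    congr 1
    field_simp
    ring
  · have hr : 0 < r := hs.trans hsr
    have hu₀ : (s / r) ^ A⁻¹ ∈ Icc (0 : ℝ) 1 :=
      ⟨Real.rpow_nonneg (div_nonneg hs.le hr.le) _, Real.rpow_le_one (div_nonneg hs.le hr.le)
        ((div_le_one hr).2 hsr.le) (inv_nonneg.2 hA.le)⟩
    have hCu₀ : (r / s) ^ B⁻¹ * ((s / r) ^ A⁻¹) ^ (A / B) = 1 := by
      rw [← Real.rpow_mul (div_nonneg hs.le hr.le), show A⁻¹ * (A / B) = B⁻¹ by field_simp,
        ← Real.mul_rpow (div_nonneg hr.le hs.le) (div_nonneg hs.le hr.le),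
        div_mul_div_cancel₀ hs.ne', div_self hr.ne', Real.one_rpow]
    have hC1 : 1 ≤ (r / s) ^ B⁻¹ :=
      Real.one_le_rpow ((one_le_div hs).2 hsr.le) (inv_nonneg.2 hB.le)
    rw [setLIntegral_Icc_ofReal_one_sub_mul_rpow_of_mul_rpow_eq_one hγ hC hu₀ hCu₀,
      volume_setOf_mem_Icc_rpow_mul_lt_of_lt hA hs.le hsr,
      ENNReal.ofReal_eq_zero.2 (sub_nonpos.2 hC1), mul_zero, add_zero,
      ← ENNReal.ofReal_mul (by positivity)]
    congr 1
    field_simp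

end Planar

open Finset

/-- The paper's `f(a₁,…,aₘ; b₁,…,bₙ)`. -/
noncomputable def hypervolume (m n : ℕ) (a : Fin m → ℝ) (b : Fin n → ℝ) : ℝ :=
  (volume {z : (Fin m → ℝ) × (Fin n → ℝ) |
    (∀ i, z.1 i ∈ Set.Icc (0 : ℝ) 1) ∧ (∀ j, z.2 j ∈ Set.Icc (0 : ℝ) 1) ∧
    ∏ i, (z.1 i) ^ (a i) < ∏ j, (z.2 j) ^ (b j)}).toReal

section Region

variable {m n : ℕ}

def hypervolumeRegion (a : Fin m → ℝ) (b : Fin n → ℝ) : Set ((Fin m → ℝ) × (Fin n → ℝ)) :=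
  {z | (∀ i, z.1 i ∈ Set.Icc (0 : ℝ) 1) ∧ (∀ j, z.2 j ∈ Set.Icc (0 : ℝ) 1) ∧
    ∏ i, z.1 i ^ a i < ∏ j, z.2 j ^ b j}

theorem hypervolume_eq_toReal_volume (a : Fin m → ℝ) (b : Fin n → ℝ) :
    hypervolume m n a b = (volume (hypervolumeRegion a b)).toReal := rfl

theorem measurableSet_hypervolumeRegion (a : Fin m → ℝ) (b : Fin n → ℝ) :
    MeasurableSet (hypervolumeRegion a b) := by
  unfold hypervolumeRegion
  simp only [Set.ofPred_and, Set.ofPred_forall]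
  refine .inter (.iInter fun i => measurableSet_Icc.preimage (measurable_fst.eval))
    (.inter (.iInter fun j => measurableSet_Icc.preimage (measurable_snd.eval)) ?_)
  exact measurableSet_lt
    (Finset.measurable_prod _ fun i _ => (measurable_fst.eval).pow_const _)
    (Finset.measurable_prod _ fun j _ => (measurable_snd.eval).pow_const _)

theorem volume_hypervolumeRegion_ne_top (a : Fin m → ℝ) (b : Fin n → ℝ) :
    volume (hypervolumeRegion a b) ≠ ⊤ := by
  refine ne_top_of_le_ne_top ?_ (measure_mono (t :=
    (Set.univ.pi fun _ => Set.Icc (0 : ℝ) 1) ×ˢ (Set.univ.pi fun _ => Set.Icc (0 : ℝ) 1))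
    fun z hz => ⟨fun i _ => hz.1 i, fun j _ => hz.2.1 j⟩)
  rw [Measure.volume_eq_prod, Measure.prod_prod, volume_pi_pi, volume_pi_pi]
  simp

theorem volume_hypervolumeRegion_eq_add {a : Fin (m + 1) → ℝ} {b : Fin (n + 1) → ℝ}
    (ha : 0 < a 0) (hb : 0 < b 0) :
    volume (hypervolumeRegion a b) =
      ENNReal.ofReal (a 0 / (a 0 + b 0)) * volume (hypervolumeRegion a (Fin.tail b)) +
        ENNReal.ofReal (b 0 / (a 0 + b 0)) * volume (hypervolumeRegion (Fin.tail a) b) := by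
  rw [volume_eq_lintegral_volume_fin_cons_fin_cons (measurableSet_hypervolumeRegion a b),
    volume_eq_lintegral_volume_fin_cons_left (measurableSet_hypervolumeRegion a _),
    volume_eq_lintegral_volume_fin_cons_right (measurableSet_hypervolumeRegion _ b),
    ← lintegral_const_mul' _ _ ENNReal.ofReal_ne_top,
    ← lintegral_const_mul' _ _ ENNReal.ofReal_ne_top,
    ← lintegral_add_left ((measurable_volume_setOf_fin_cons_left
      (measurableSet_hypervolumeRegion a _)).const_mul _)]
  refine lintegral_congr fun z => ?_
  simp only [hypervolumeRegion, Set.mem_ofPred_eq, Fin.forall_fin_succ, Fin.cons_zero,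
    Fin.cons_succ, Fin.prod_univ_succ, Fin.tail]
  by_cases hz : (∀ i, z.1 i ∈ Set.Icc (0 : ℝ) 1) ∧ ∀ j, z.2 j ∈ Set.Icc (0 : ℝ) 1
  · simp only [hz.1, hz.2, implies_true, and_true, true_and]
    exact volume_unitSquare_rpow_mul_lt ha hb
      (prod_nonneg fun i _ => Real.rpow_nonneg (hz.1 i).1 _)
      (prod_nonneg fun j _ => Real.rpow_nonneg (hz.2 j).1 _)
  · rcases not_and_or.1 hz with hx | hy
    · simp only [hx, and_false, false_and, Set.ofPred_false, measure_empty, mul_zero, add_zero]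
    · simp only [hy, and_false, false_and, Set.ofPred_false, measure_empty, mul_zero, add_zero]

end Region

/-- the hypervolume satisfies the recurrence
`f(a₁,…,aₘ; b₁,…,bₙ) = (a₁/(a₁+b₁))·f(a₁,…,aₘ; b₂,…,bₙ) + (b₁/(a₁+b₁))·f(a₂,…,aₘ; b₁,…,bₙ)`. -/
theorem stmt1 (m n : ℕ) (a : Fin (m + 1) → ℝ) (b : Fin (n + 1) → ℝ)
    (ha : ∀ i, 0 < a i) (hb : ∀ j, 0 < b j) :
    hypervolume (m + 1) (n + 1) a b
      = a 0 / (a 0 + b 0) * hypervolume (m + 1) n a (Fin.tail b)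
        + b 0 / (a 0 + b 0) * hypervolume m (n + 1) (Fin.tail a) b := by
  have hab : 0 < a 0 + b 0 := add_pos (ha 0) (hb 0)
  simp only [hypervolume_eq_toReal_volume]
  rw [volume_hypervolumeRegion_eq_add (ha 0) (hb 0),
    ENNReal.toReal_add
      (ENNReal.mul_ne_top ENNReal.ofReal_ne_top (volume_hypervolumeRegion_ne_top _ _))
      (ENNReal.mul_ne_top ENNReal.ofReal_ne_top (volume_hypervolumeRegion_ne_top _ _)),
    ENNReal.toReal_mul, ENNReal.toReal_mul,
    ENNReal.toReal_ofReal (div_nonneg (ha 0).le hab.le),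
    ENNReal.toReal_ofReal (div_nonneg (hb 0).le hab.le)]
end

section
/- For positive reals a₁,…,aₘ and a positive real b₁, the hypervolume f satisfies f(a₁,…,aₘ; b₁) = 1 − b₁ᵐ / ((b₁+a₁)(b₁+a₂)⋯(b₁+aₘ)). -/
open MeasureTheory Finset

/-!
By Fubini over `x`: for `x` in the unit cube, the `y`-slice is the interval
`((∏ xᵢ^{aᵢ})^{1/b}, 1]`, of length `1 - ∏ xᵢ^{aᵢ/b}`. The integral of this product over the cube
factors into one-dimensional integrals `∫₀¹ t^{aᵢ/b} dt = b / (b + aᵢ)`.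
-/

open Set

lemma integral_Icc_zero_one_rpow {c : ℝ} (hc : -1 < c) :
    ∫ t in Icc (0 : ℝ) 1, t ^ c = (c + 1)⁻¹ := by
  rw [integral_Icc_eq_integral_Ioc, ← intervalIntegral.integral_of_le zero_le_one,
    integral_rpow (Or.inl hc), Real.one_rpow, Real.zero_rpow (by linarith), sub_zero, one_div]

lemma integral_unitCube_prod_rpow {ι : Type*} [Fintype ι] {c : ι → ℝ} (hc : ∀ i, -1 < c i) :
    ∫ x in univ.pi fun _ : ι => Icc (0 : ℝ) 1, ∏ i, x i ^ c i = ∏ i, (c i + 1)⁻¹ := by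
  rw [volume_pi, Measure.restrict_pi_pi, integral_fintype_prod_eq_prod (fun i t => t ^ c i)]
  exact prod_congr rfl fun i _ => integral_Icc_zero_one_rpow (hc i)

lemma integral_unitCube_one_sub_prod_rpow {ι : Type*} [Fintype ι] {c : ι → ℝ}
    (hc : ∀ i, -1 < c i) :
    ∫ x in univ.pi fun _ : ι => Icc (0 : ℝ) 1, (1 - ∏ i, x i ^ c i) = 1 - ∏ i, (c i + 1)⁻¹ := by
  have hvol : volume (univ.pi fun _ : ι => Icc (0 : ℝ) 1) = 1 := by
    rw [volume_pi_pi]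
    simp
  have hint : IntegrableOn (fun x : ι → ℝ => ∏ i, x i ^ c i) (univ.pi fun _ => Icc 0 1) :=
    Integrable.of_integral_ne_zero <| by
      rw [integral_unitCube_prod_rpow hc]
      exact prod_ne_zero_iff.2 fun i _ => inv_ne_zero (by linarith [hc i])
  rw [integral_sub (integrableOn_const (hvol ▸ ENNReal.one_ne_top)).integrable hint.integrable,
    setIntegral_const, integral_unitCube_prod_rpow hc, measureReal_def, hvol, ENNReal.toReal_one, one_smul]

lemma volume_unitCube_one_setOf_lt_prod_rpow {q b : ℝ} (hq : 0 ≤ q) (hb : 0 < b) :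
    volume {y : Fin 1 → ℝ | (∀ j, y j ∈ Icc (0 : ℝ) 1) ∧ q < ∏ j, y j ^ b} =
      ENNReal.ofReal (1 - q ^ b⁻¹) := by
  have hset : {y : Fin 1 → ℝ | (∀ j, y j ∈ Icc (0 : ℝ) 1) ∧ q < ∏ j, y j ^ b} =
      univ.pi fun _ => Ioc (q ^ b⁻¹) 1 := by
    ext y
    simp only [mem_ofPred_eq, mem_pi, mem_univ, true_implies, Fin.forall_fin_one,
      Fin.prod_univ_one, Set.mem_Icc, Set.mem_Ioc]
    constructor
    · rintro ⟨⟨h0, h1⟩, hlt⟩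
      exact ⟨(Real.rpow_inv_lt_iff_of_pos hq h0 hb).2 hlt, h1⟩
    · rintro ⟨hlt, h1⟩
      have h0 : 0 ≤ y 0 := (Real.rpow_nonneg hq _).trans hlt.le
      exact ⟨⟨h0, h1⟩, (Real.rpow_inv_lt_iff_of_pos hq h0 hb).1 hlt⟩
  rw [hset, volume_pi_pi, Fin.prod_univ_one, Real.volume_Ioc]

def hypervolumeSet (m n : ℕ) (a : Fin m → ℝ) (b : Fin n → ℝ) :
    Set ((Fin m → ℝ) × (Fin n → ℝ)) :=
  {z | (∀ i, z.1 i ∈ Icc (0 : ℝ) 1) ∧ (∀ j, z.2 j ∈ Icc (0 : ℝ) 1) ∧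
    ∏ i, (z.1 i) ^ (a i) < ∏ j, (z.2 j) ^ (b j)}

lemma measurableSet_hypervolumeSet (m n : ℕ) (a : Fin m → ℝ) (b : Fin n → ℝ) :
    MeasurableSet (hypervolumeSet m n a b) := by
  unfold hypervolumeSet
  measurability

lemma prod_rpow_rpow_inv {ι : Type*} [Fintype ι] {x a : ι → ℝ} (hx : ∀ i, 0 ≤ x i) (b : ℝ) :
    (∏ i, x i ^ a i) ^ b⁻¹ = ∏ i, x i ^ (a i / b) := by
  rw [← Real.finsetProd_rpow _ _ fun i _ => Real.rpow_nonneg (hx i) _]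
  exact prod_congr rfl fun i _ => by rw [← Real.rpow_mul (hx i), div_eq_mul_inv]

lemma volume_preimage_prodMk_hypervolumeSet_one {m : ℕ} (a : Fin m → ℝ) {b : ℝ} (hb : 0 < b)
    (x : Fin m → ℝ) :
    volume (Prod.mk x ⁻¹' hypervolumeSet m 1 a fun _ => b) =
      (univ.pi fun _ => Icc (0 : ℝ) 1).indicator
        (fun x => ENNReal.ofReal (1 - ∏ i, x i ^ (a i / b))) x := by
  by_cases hx : x ∈ univ.pi fun _ => Icc (0 : ℝ) 1
  · have hx0 : ∀ i, 0 ≤ x i := fun i => (hx i trivial).1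
    rw [indicator_of_mem hx, ← prod_rpow_rpow_inv hx0,
      ← volume_unitCube_one_setOf_lt_prod_rpow
        (prod_nonneg fun i _ => Real.rpow_nonneg (hx0 i) _) hb]
    congr 1
    ext y
    exact and_iff_right fun i => hx i trivial
  · have hempty : Prod.mk x ⁻¹' hypervolumeSet m 1 a (fun _ => b) = ∅ :=
      eq_empty_of_forall_notMem fun y hy => hx fun i _ => hy.1 i
    rw [indicator_of_notMem hx, hempty, measure_empty]

lemma hypervolume_one_eq_setIntegral {m : ℕ} {a : Fin m → ℝ} {b : ℝ} (ha : ∀ i, 0 ≤ a i)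
    (hb : 0 < b) :
    hypervolume m 1 a (fun _ => b) =
      ∫ x in univ.pi fun _ => Icc (0 : ℝ) 1, (1 - ∏ i, x i ^ (a i / b)) := by
  have hcube : MeasurableSet (univ.pi fun _ : Fin m => Icc (0 : ℝ) 1) :=
    .univ_pi fun _ => measurableSet_Icc
  have hcont : Continuous fun x : Fin m → ℝ => 1 - ∏ i, x i ^ (a i / b) :=
    continuous_const.sub <| continuous_finsetProd _ fun i _ =>
      (continuous_apply i).rpow_const fun _ => Or.inr (div_nonneg (ha i) hb.le)
  have hnonneg : ∀ x ∈ univ.pi fun _ : Fin m => Icc (0 : ℝ) 1, 0 ≤ 1 - ∏ i, x i ^ (a i / b) :=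
    fun x hx => sub_nonneg.2 <| prod_le_one (fun i _ => Real.rpow_nonneg (hx i trivial).1 _)
      fun i _ => Real.rpow_le_one (hx i trivial).1 (hx i trivial).2 (div_nonneg (ha i) hb.le)
  change (volume (hypervolumeSet m 1 a fun _ => b)).toReal = _
  rw [Measure.volume_eq_prod, Measure.prod_apply (measurableSet_hypervolumeSet ..),
    lintegral_congr (volume_preimage_prodMk_hypervolumeSet_one a hb), lintegral_indicator hcube,
    ← ofReal_integral_eq_lintegral_ofReal
      (hcont.continuousOn.integrableOn_compact (isCompact_univ_pi fun _ => isCompact_Icc))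
      (ae_restrict_of_forall_mem hcube hnonneg),
    ENNReal.toReal_ofReal (setIntegral_nonneg hcube hnonneg)]

/-- `f(a₁,…,aₘ; b₁) = 1 − b₁ᵐ / ((b₁+a₁)(b₁+a₂)⋯(b₁+aₘ))`. -/
theorem stmt3 (m : ℕ) (a : Fin m → ℝ) (b₁ : ℝ) (ha : ∀ i, 0 < a i) (hb : 0 < b₁) :
    hypervolume m 1 a (fun _ => b₁) = 1 - b₁ ^ m / ∏ i, (b₁ + a i) := by
  have hfactor : ∀ i, (a i / b₁ + 1)⁻¹ = b₁ / (b₁ + a i) := fun i => by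
    field_simp
    ring
  rw [hypervolume_one_eq_setIntegral (fun i => (ha i).le) hb,
    integral_unitCube_one_sub_prod_rpow fun i => by linarith [div_pos (ha i) hb],
    prod_congr rfl fun i _ => hfactor i, prod_div_distrib, prod_const, card_univ, Fintype.card_fin]
end

section
/- For positive reals a₁,…,aₘ and b₁,…,bₙ, the hypervolume f satisfies f(a₁,…,aₘ; b₁,…,bₙ) = ∫_E exp(−(X₁+⋯+Xₘ) − (Y₁+⋯+Yₙ)) dX dY, where E = {(X,Y) ∈ ℝ^m × ℝ^n : Xᵢ ≥ 0 for all i, Yⱼ ≥ 0 for all j, and a₁X₁+⋯+aₘXₘ > b₁Y₁+⋯+bₙYₙ}. -/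
open MeasureTheory Finset

/-!
Substitute `x = exp (-X)`, `y = exp (-Y)` coordinatewise. This maps the open orthant
`(0,∞)ᵐ × (0,∞)ⁿ` injectively onto the open cube `(0,1)ᵐ × (0,1)ⁿ`, turns
`∏ xᵢ^{aᵢ} < ∏ yⱼ^{bⱼ}` into `∑ bⱼ Yⱼ < ∑ aᵢ Xᵢ`, and has Jacobian
`exp (-∑ Xᵢ - ∑ Yⱼ)` in absolute value, so the change of variables formula gives the
identity up to the boundaries of the cube and of the orthant, which are null sets.
-/

open Set Real Filter

section

variable {ι κ : Type*}

noncomputable def expNeg (X : ι → ℝ) : ι → ℝ := fun i => exp (-X i)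

noncomputable def expNegDeriv (X : ι → ℝ) : (ι → ℝ) →L[ℝ] ι → ℝ :=
  ContinuousLinearMap.pi fun i => (-exp (-X i)) • ContinuousLinearMap.proj i

theorem expNeg_injective : Function.Injective (expNeg : (ι → ℝ) → ι → ℝ) := fun _ _ h =>
  funext fun i => neg_injective <| exp_injective (congrFun h i)

theorem image_expNeg_univ_pi_Ioi :
    expNeg '' Set.univ.pi (fun _ : ι => Set.Ioi (0 : ℝ)) = Set.univ.pi fun _ => Set.Ioo 0 1 := by
  have h : (fun t : ℝ => exp (-t)) '' Set.Ioi 0 = Set.Ioo 0 1 := by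
    rw [← exp_zero, ← image_exp_Iio, ← image_image exp Neg.neg, image_neg_Ioi, neg_zero]
  rw [← h]
  exact piMap_image_univ_pi (fun _ t => exp (-t)) _

variable [Fintype ι] [Fintype κ]

theorem hasFDerivAt_expNeg (X : ι → ℝ) : HasFDerivAt expNeg (expNegDeriv X) X :=
  hasFDerivAt_pi.2 fun i =>
    ((Real.hasDerivAt_exp _).comp _ (hasDerivAt_neg _)).comp_hasFDerivAt X
      (hasFDerivAt_apply i X) |>.congr_fderiv (by ext; simp)

theorem abs_det_expNegDeriv (X : ι → ℝ) : |(expNegDeriv X).det| = exp (-∑ i, X i) := by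
  classical
  have hdiag : (expNegDeriv X : (ι → ℝ) →ₗ[ℝ] ι → ℝ) =
      Matrix.toLin' (Matrix.diagonal fun i => -exp (-X i)) := by
    ext v i
    simp [expNegDeriv, Matrix.toLin'_apply, Matrix.mulVec_diagonal]
  rw [ContinuousLinearMap.det, hdiag, LinearMap.det_toLin', Matrix.det_diagonal, abs_prod]
  simp_rw [abs_neg, abs_exp, ← exp_sum, sum_neg_distrib]

theorem abs_det_prodMap_expNegDeriv (z : (ι → ℝ) × (κ → ℝ)) :
    |((expNegDeriv z.1).prodMap (expNegDeriv z.2)).det| = exp (-(∑ i, z.1 i) - ∑ j, z.2 j) := by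
  rw [ContinuousLinearMap.det, ContinuousLinearMap.coe_prodMap, LinearMap.det_prodMap, abs_mul,
    abs_det_expNegDeriv, abs_det_expNegDeriv, ← exp_add, sub_eq_add_neg]

theorem volume_real_image_prodMap_expNeg {s : Set ((ι → ℝ) × (κ → ℝ))} (hs : MeasurableSet s) :
    volume.real (Prod.map expNeg expNeg '' s) = ∫ z in s, exp (-(∑ i, z.1 i) - ∑ j, z.2 j) := by
  have : (volume : Measure ((ι → ℝ) × (κ → ℝ))).IsAddHaarMeasure :=
    Measure.prod.instIsAddHaarMeasure _ _
  calc volume.real (Prod.map expNeg expNeg '' s)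
      = ∫ _ in Prod.map expNeg expNeg '' s, (1 : ℝ) := by
        rw [setIntegral_const, smul_eq_mul, mul_one]
    _ = ∫ z in s, |((expNegDeriv z.1).prodMap (expNegDeriv z.2)).det| • (1 : ℝ) :=
        integral_image_eq_integral_abs_det_fderiv_smul volume hs
          (fun z _ =>
            ((hasFDerivAt_expNeg z.1).prodMap z (hasFDerivAt_expNeg z.2)).hasFDerivWithinAt)
          (expNeg_injective.prodMap expNeg_injective).injOn _
    _ = ∫ z in s, exp (-(∑ i, z.1 i) - ∑ j, z.2 j) :=
        setIntegral_congr_fun hs fun z _ => by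
          rw [smul_eq_mul, mul_one, abs_det_prodMap_expNegDeriv]

theorem prod_expNeg_rpow (c X : ι → ℝ) : ∏ i, expNeg X i ^ c i = exp (-∑ i, c i * X i) := by
  simp_rw [expNeg, ← exp_mul, ← exp_sum, ← sum_neg_distrib, neg_mul, mul_comm]

theorem preimage_prodMap_expNeg_setOf_prod_rpow_lt (a : ι → ℝ) (b : κ → ℝ) :
    Prod.map expNeg expNeg ⁻¹' {z | ∏ i, z.1 i ^ a i < ∏ j, z.2 j ^ b j} =
      {z : (ι → ℝ) × (κ → ℝ) | ∑ j, b j * z.2 j < ∑ i, a i * z.1 i} := by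
  ext z
  simp [prod_expNeg_rpow]

theorem ae_eq_univ_pi_Ioi_prod_inter (p : (ι → ℝ) × (κ → ℝ) → Prop) :
    {z : (ι → ℝ) × (κ → ℝ) | (∀ i, 0 ≤ z.1 i) ∧ (∀ j, 0 ≤ z.2 j) ∧ p z} =ᵐ[volume]
      ((Set.univ.pi fun _ => Set.Ioi 0) ×ˢ (Set.univ.pi fun _ => Set.Ioi 0) ∩ {z | p z} :
        Set _) := by
  refine EventuallyEq.trans (.of_eq ?_) ((Measure.set_prod_ae_eq Measure.pi_Ioi_ae_eq_pi_Ici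
    Measure.pi_Ioi_ae_eq_pi_Ici).inter (ae_eq_refl _)).symm
  refine Set.ext fun z => ?_
  simp only [Set.mem_ofPred_eq, Set.mem_inter_iff, Set.mem_prod, Set.mem_univ_pi, Set.mem_Ici,
    and_assoc]

theorem ae_eq_univ_pi_Ioo_prod_inter (p : (ι → ℝ) × (κ → ℝ) → Prop) :
    {z : (ι → ℝ) × (κ → ℝ) |
        (∀ i, z.1 i ∈ Set.Icc 0 1) ∧ (∀ j, z.2 j ∈ Set.Icc 0 1) ∧ p z} =ᵐ[volume]
      ((Set.univ.pi fun _ => Set.Ioo 0 1) ×ˢ (Set.univ.pi fun _ => Set.Ioo 0 1) ∩ {z | p z} :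
        Set _) := by
  refine EventuallyEq.trans (.of_eq ?_) ((Measure.set_prod_ae_eq Measure.pi_Ioo_ae_eq_pi_Icc
    Measure.pi_Ioo_ae_eq_pi_Icc).inter (ae_eq_refl _)).symm
  refine Set.ext fun z => ?_
  simp only [Set.mem_ofPred_eq, Set.mem_inter_iff, Set.mem_prod, Set.mem_univ_pi, and_assoc]

end

theorem stmt10_general (m n : ℕ) (a : Fin m → ℝ) (b : Fin n → ℝ) :
    hypervolume m n a b
      = ∫ z in {z : (Fin m → ℝ) × (Fin n → ℝ) |
            (∀ i, 0 ≤ z.1 i) ∧ (∀ j, 0 ≤ z.2 j) ∧ ∑ j, b j * z.2 j < ∑ i, a i * z.1 i},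
          Real.exp (-(∑ i, z.1 i) - ∑ j, z.2 j) := by
  set P : Set ((Fin m → ℝ) × (Fin n → ℝ)) :=
    (Set.univ.pi fun _ => Set.Ioi 0) ×ˢ (Set.univ.pi fun _ => Set.Ioi 0)
  set L : Set ((Fin m → ℝ) × (Fin n → ℝ)) := {z | ∑ j, b j * z.2 j < ∑ i, a i * z.1 i}
  have hPL : MeasurableSet (P ∩ L) :=
    ((MeasurableSet.univ_pi fun _ => measurableSet_Ioi).prod
      (MeasurableSet.univ_pi fun _ => measurableSet_Ioi)).inter
      (measurableSet_lt (by fun_prop) (by fun_prop))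
  calc hypervolume m n a b
      = volume.real ((Set.univ.pi fun _ => Set.Ioo 0 1) ×ˢ (Set.univ.pi fun _ => Set.Ioo 0 1) ∩
          {z : (Fin m → ℝ) × (Fin n → ℝ) | ∏ i, z.1 i ^ a i < ∏ j, z.2 j ^ b j}) :=
        measureReal_congr (ae_eq_univ_pi_Ioo_prod_inter _)
    _ = volume.real (Prod.map expNeg expNeg '' (P ∩ L)) := by
        rw [← image_expNeg_univ_pi_Ioi, ← image_expNeg_univ_pi_Ioi, ← prodMap_image_prod,
          ← image_inter_preimage, preimage_prodMap_expNeg_setOf_prod_rpow_lt]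
    _ = ∫ z in P ∩ L, exp (-(∑ i, z.1 i) - ∑ j, z.2 j) := volume_real_image_prodMap_expNeg hPL
    _ = _ := setIntegral_congr_set (ae_eq_univ_pi_Ioi_prod_inter _).symm

/-- the hypervolume equals the integral of
`exp(−(X₁+⋯+Xₘ) − (Y₁+⋯+Yₙ))` over the region
`E = {(X,Y) : Xᵢ ≥ 0, Yⱼ ≥ 0, a₁X₁+⋯+aₘXₘ > b₁Y₁+⋯+bₙYₙ}`. -/
theorem stmt10 (m n : ℕ) (a : Fin m → ℝ) (b : Fin n → ℝ)
    (ha : ∀ i, 0 < a i) (hb : ∀ j, 0 < b j) :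
    hypervolume m n a b
      = ∫ z in {z : (Fin m → ℝ) × (Fin n → ℝ) |
            (∀ i, 0 ≤ z.1 i) ∧ (∀ j, 0 ≤ z.2 j) ∧ ∑ j, b j * z.2 j < ∑ i, a i * z.1 i},
          Real.exp (-(∑ i, z.1 i) - ∑ j, z.2 j) :=
  stmt10_general m n a b
end

section
/- Let a₁,…,aₘ be pairwise distinct positive reals and b₁,…,bₙ be positive reals. Then the hypervolume satisfies the closed form f(a₁,…,aₘ; b₁,…,bₙ) = Σ_{i=1}^{m} ( ∏_{k≠i} aᵢ/(aᵢ − aₖ) ) · ( ∏_{j=1}^{n} aᵢ/(aᵢ + bⱼ) ). -/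
/-!
For `0 ≤ t ≤ 1`, the set of `x ∈ [0,1]ᵐ` with `∏ xᵢ^{aᵢ} < t` has volume `∑ᵢ wᵢ t^{1/aᵢ}`, where
`wᵢ = ∏_{k≠i} aᵢ/(aᵢ - aₖ)`. This goes by induction on `m`, integrating out `x₀`: for
`x₀ ≤ t^{1/a₀}` the slice is the whole cube, and otherwise the induction hypothesis applies at level
`t / x₀^{a₀}`. The resulting integrals are powers of `x₀`, and the formula closes up because the
weights of `a` and of its tail differ by the factor `aᵢ/(aᵢ - a₀)` and satisfy `∑ᵢ wᵢ = 1`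
(the coefficient of `X^{m-1}` in the Lagrange interpolation of `X^{m-1}`).
Integrating the formula at `t = ∏ yⱼ^{bⱼ}` over `y ∈ [0,1]ⁿ` gives the theorem, since
`∫ ∏ⱼ yⱼ^{bⱼ/aᵢ} dy = ∏ⱼ aᵢ/(aᵢ + bⱼ)`.
-/

open MeasureTheory Finset

theorem Lagrange.sum_prod_erase_div_sub_eq_one {F ι : Type*} [Field F] [DecidableEq ι]
    {s : Finset ι} {v : ι → F} (hs : s.Nonempty) (hv : Set.InjOn v s) :
    ∑ i ∈ s, ∏ k ∈ s.erase i, v i / (v i - v k) = 1 := by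
  have hdeg : (Polynomial.X ^ (#s - 1) : Polynomial F).degree < #s := by
    rw [Polynomial.degree_X_pow]
    exact_mod_cast Nat.sub_lt hs.card_pos one_pos
  have := Lagrange.coeff_eq_sum hv hdeg
  simp only [Polynomial.coeff_X_pow_self, Polynomial.eval_pow, Polynomial.eval_X] at this
  rw [this]
  refine sum_congr rfl fun i hi => ?_
  rw [prod_div_distrib, prod_const, card_erase_of_mem hi]

noncomputable def lagrangeWeight {m : ℕ} (a : Fin m → ℝ) (i : Fin m) : ℝ :=
  ∏ k ∈ univ.erase i, a i / (a i - a k)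

theorem lagrangeWeight_succ {m : ℕ} (a : Fin (m + 1) → ℝ) (i : Fin m) :
    lagrangeWeight a i.succ = a i.succ / (a i.succ - a 0) * lagrangeWeight (Fin.tail a) i := by
  rw [lagrangeWeight, Fin.univ_succ, erase_cons_of_ne _ (Fin.succ_ne_zero i).symm, prod_cons]
  erw [← map_erase, prod_map]
  rfl

noncomputable def lagrangeRpowSum {m : ℕ} (a : Fin m → ℝ) (t : ℝ) : ℝ :=
  ∑ i, lagrangeWeight a i * t ^ (1 / a i)

theorem integral_div_rpow_rpow {α β t : ℝ} (hα : α ≠ 0) (hβ : β ≠ 0) (hαβ : α ≠ β) (ht : 0 < t) :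
    ∫ x in t ^ (1 / α)..1, (t / x ^ α) ^ (1 / β) = β / (β - α) * (t ^ (1 / β) - t ^ (1 / α)) := by
  set s := t ^ (1 / α)
  have hs : 0 < s := Real.rpow_pos_of_pos ht _
  have h0 : (0 : ℝ) ∉ Set.uIcc s 1 := fun h => (lt_min hs one_pos).not_ge h.1
  have hpow : ∀ x ∈ Set.uIcc s 1, (t / x ^ α) ^ (1 / β) = t ^ (1 / β) * x ^ (-(α / β)) := by
    intro x hx
    have hx : 0 < x := lt_of_lt_of_le (lt_min hs one_pos) hx.1
    rw [Real.div_rpow ht.le (Real.rpow_nonneg hx.le _), ← Real.rpow_mul hx.le, Real.rpow_neg hx.le,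
      div_eq_mul_inv, mul_one_div]
  have hexp : -(α / β) ≠ -1 := by
    rw [Ne, neg_inj, div_eq_one_iff_eq hβ]
    exact hαβ
  have hst : t ^ (1 / β) * s ^ (-(α / β) + 1) = s := by
    rw [← Real.rpow_mul ht.le, ← Real.rpow_add ht]
    congr 1
    field_simp
    ring
  rw [intervalIntegral.integral_congr hpow, intervalIntegral.integral_const_mul,
    integral_rpow (Or.inr ⟨hexp, h0⟩), Real.one_rpow, mul_div_assoc', mul_sub, mul_one, hst]
  have hβα : β - α ≠ 0 := sub_ne_zero.2 hαβ.symm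
  rw [show -(α / β) + 1 = (β - α) / β by field_simp; ring]
  field_simp

theorem lagrangeRpowSum_succ {m : ℕ} {a : Fin (m + 1) → ℝ} (ha : ∀ i, 0 < a i)
    (hinj : Function.Injective a) {t : ℝ} (ht : 0 < t) :
    lagrangeRpowSum a t
      = t ^ (1 / a 0) + ∫ x in t ^ (1 / a 0)..1, lagrangeRpowSum (Fin.tail a) (t / x ^ a 0) := by
  set s := t ^ (1 / a 0)
  have hs : 0 < s := Real.rpow_pos_of_pos ht _
  have hint : ∀ i : Fin m, IntervalIntegrable
      (fun x => lagrangeWeight (Fin.tail a) i * (t / x ^ a 0) ^ (1 / Fin.tail a i)) volume s 1 := by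
    intro i
    have hx : ∀ x ∈ Set.uIcc s 1, x ^ a 0 ≠ 0 := fun x hx =>
      (Real.rpow_pos_of_pos (lt_of_lt_of_le (lt_min hs one_pos) hx.1) _).ne'
    exact ContinuousOn.intervalIntegrable <| continuousOn_const.mul <|
      (continuousOn_const.div (continuousOn_id.rpow_const fun _ _ => Or.inr (ha 0).le) hx).rpow_const
        fun _ _ => Or.inr (one_div_pos.2 (ha _)).le
  have hterm : ∀ i : Fin m,
      ∫ x in s..1, lagrangeWeight (Fin.tail a) i * (t / x ^ a 0) ^ (1 / Fin.tail a i)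
        = lagrangeWeight a i.succ * (t ^ (1 / a i.succ) - s) := by
    intro i
    dsimp only [Fin.tail]
    rw [intervalIntegral.integral_const_mul, integral_div_rpow_rpow (ha 0).ne' (ha i.succ).ne'
      (hinj.ne (Fin.succ_ne_zero i).symm) ht, lagrangeWeight_succ]
    ring
  have hsum : ∑ i, lagrangeWeight a i = 1 :=
    Lagrange.sum_prod_erase_div_sub_eq_one univ_nonempty fun _ _ _ _ h => hinj h
  rw [Fin.sum_univ_succ] at hsum
  simp only [lagrangeRpowSum]
  rw [intervalIntegral.integral_finsetSum fun i _ => hint i, Fin.sum_univ_succ]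
  simp only [hterm, mul_sub, sum_sub_distrib, ← sum_mul]
  linear_combination s * hsum

def unitCube (ι : Type*) : Set (ι → ℝ) := {x | ∀ i, x i ∈ Set.Icc 0 1}

theorem unitCube_eq_pi {ι : Type*} : unitCube ι = Set.univ.pi fun _ => Set.Icc 0 1 := by
  ext x
  exact Set.mem_univ_pi.symm

theorem isCompact_unitCube {ι : Type*} : IsCompact (unitCube ι) := by
  rw [unitCube_eq_pi]
  exact isCompact_univ_pi fun _ => isCompact_Icc

def cubeSublevel {ι : Type*} [Fintype ι] (a : ι → ℝ) (t : ℝ) : Set (ι → ℝ) :=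
  {x ∈ unitCube ι | ∏ i, x i ^ a i < t}

section Cube

variable {ι : Type*} [Fintype ι]

theorem measurableSet_unitCube : MeasurableSet (unitCube ι) := by
  rw [unitCube_eq_pi]
  exact .univ_pi fun _ => measurableSet_Icc

theorem volume_unitCube : volume (unitCube ι) = 1 := by
  rw [unitCube_eq_pi, volume_pi_pi]
  simp

theorem prod_rpow_nonneg_of_mem_unitCube {x : ι → ℝ} (hx : x ∈ unitCube ι) (a : ι → ℝ) :
    0 ≤ ∏ i, x i ^ a i :=
  prod_nonneg fun i _ => Real.rpow_nonneg (hx i).1 _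

theorem prod_rpow_le_one_of_mem_unitCube {x : ι → ℝ} (hx : x ∈ unitCube ι) {a : ι → ℝ}
    (ha : ∀ i, 0 ≤ a i) : ∏ i, x i ^ a i ≤ 1 :=
  prod_le_one (fun i _ => Real.rpow_nonneg (hx i).1 _)
    fun i _ => Real.rpow_le_one (hx i).1 (hx i).2 (ha i)

theorem measurable_prod_rpow (a : ι → ℝ) : Measurable fun x : ι → ℝ => ∏ i, x i ^ a i :=
  Finset.measurable_prod _ fun i _ => (measurable_pi_apply i).pow_const _

theorem continuous_prod_rpow {a : ι → ℝ} (ha : ∀ i, 0 ≤ a i) :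
    Continuous fun x : ι → ℝ => ∏ i, x i ^ a i :=
  continuous_finsetProd _ fun i _ => (continuous_apply i).rpow_const fun _ => Or.inr (ha i)

variable (a : ι → ℝ)

theorem measurableSet_cubeSublevel (t : ℝ) : MeasurableSet (cubeSublevel a t) :=
  measurableSet_unitCube.inter (measurableSet_lt (measurable_prod_rpow a) measurable_const)

theorem monotone_cubeSublevel : Monotone (cubeSublevel a) :=
  fun _ _ hst _ hx => ⟨hx.1, hx.2.trans_le hst⟩

theorem measurable_volume_cubeSublevel : Measurable fun t => volume (cubeSublevel a t) :=
  Monotone.measurable fun _ _ hst => measure_mono (monotone_cubeSublevel a hst)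

theorem volume_cubeSublevel_le_one (t : ℝ) : volume (cubeSublevel a t) ≤ 1 :=
  volume_unitCube (ι := ι) ▸ measure_mono fun _ hx => hx.1

theorem cubeSublevel_of_nonpos {t : ℝ} (ht : t ≤ 0) : cubeSublevel a t = ∅ :=
  Set.eq_empty_of_forall_notMem fun _ hx =>
    (hx.2.trans_le ht).not_ge (prod_rpow_nonneg_of_mem_unitCube hx.1 a)

theorem cubeSublevel_of_one_lt {a : ι → ℝ} (ha : ∀ i, 0 ≤ a i) {t : ℝ} (ht : 1 < t) :
    cubeSublevel a t = unitCube ι :=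
  Set.sep_eq_self_iff_mem_true.2 fun _ hx => (prod_rpow_le_one_of_mem_unitCube hx ha).trans_lt ht

theorem toReal_setLIntegral_volume_cubeSublevel {X : Type*} [MeasurableSpace X] (μ : Measure X)
    {φ : X → ℝ} (hφ : Measurable φ) (s : Set X) :
    (∫⁻ x in s, volume (cubeSublevel a (φ x)) ∂μ).toReal
      = ∫ x in s, (volume (cubeSublevel a (φ x))).toReal ∂μ :=
  (integral_toReal ((measurable_volume_cubeSublevel a).comp hφ).aemeasurable
    (ae_of_all _ fun _ => (volume_cubeSublevel_le_one a _).trans_lt ENNReal.one_lt_top)).symm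

end Cube

theorem volume_eq_lintegral_volume_cons {m : ℕ} {S : Set (Fin (m + 1) → ℝ)}
    (hS : MeasurableSet S) : volume S = ∫⁻ x, volume {y : Fin m → ℝ | Fin.cons x y ∈ S} := by
  rw [← (volume_preserving_piFinSuccAbove (fun _ => ℝ) 0).symm.measure_preimage
    hS.nullMeasurableSet, Measure.volume_eq_prod, Measure.prod_apply (hS.preimage (by fun_prop))]
  simp only [MeasurableEquiv.piFinSuccAbove_symm_apply, Fin.insertNthEquiv, Equiv.coe_fn_mk,
    Fin.insertNth_zero']
  rfl

theorem cons_preimage_cubeSublevel {m : ℕ} (a : Fin (m + 1) → ℝ) (t : ℝ) {x : ℝ}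
    (hx : x ∈ Set.Ioc 0 1) :
    {y | Fin.cons x y ∈ cubeSublevel a t} = cubeSublevel (Fin.tail a) (t / x ^ a 0) := by
  ext y
  simp only [cubeSublevel, unitCube, Set.mem_ofPred_eq, Fin.forall_fin_succ, Fin.cons_zero,
    Fin.cons_succ, Fin.prod_univ_succ, lt_div_iff₀ (Real.rpow_pos_of_pos hx.1 _)]
  simp [Fin.tail, hx.1.le, hx.2, mul_comm]

theorem cons_preimage_cubeSublevel_of_notMem {m : ℕ} (a : Fin (m + 1) → ℝ) (t : ℝ) {x : ℝ}
    (hx : x ∉ Set.Icc 0 1) : {y | Fin.cons x y ∈ cubeSublevel a t} = ∅ :=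
  Set.eq_empty_of_forall_notMem fun _ hy => hx (hy.1 0)

theorem volume_cubeSublevel_succ {m : ℕ} (a : Fin (m + 1) → ℝ) (t : ℝ) :
    volume (cubeSublevel a t)
      = ∫⁻ x in Set.Ioc 0 1, volume (cubeSublevel (Fin.tail a) (t / x ^ a 0)) := by
  rw [volume_eq_lintegral_volume_cons (measurableSet_cubeSublevel a t),
    ← setLIntegral_eq_of_support_subset, Measure.restrict_congr_set Ioc_ae_eq_Icc.symm]
  · exact setLIntegral_congr_fun measurableSet_Ioc fun x hx => by
      rw [cons_preimage_cubeSublevel a t hx]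
  · refine Function.support_subset_iff'.2 fun x hx => ?_
    simp only [cons_preimage_cubeSublevel_of_notMem a t hx, measure_empty]

theorem toReal_volume_cubeSublevel {m : ℕ} {a : Fin m → ℝ} (ha : ∀ i, 0 < a i)
    (hinj : Function.Injective a) {t : ℝ} (ht₀ : 0 ≤ t) (ht₁ : t ≤ 1) :
    (volume (cubeSublevel a t)).toReal = lagrangeRpowSum a t := by
  induction m generalizing t with
  | zero => simp [cubeSublevel, lagrangeRpowSum, ht₁.not_gt]
  | succ m ih =>
    rcases ht₀.eq_or_lt with rfl | ht
    · simp [cubeSublevel_of_nonpos, lagrangeRpowSum, Real.zero_rpow, (ha _).ne']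
    set s := t ^ (1 / a 0)
    have hs₀ : 0 < s := Real.rpow_pos_of_pos ht _
    have hs₁ : s ≤ 1 := Real.rpow_le_one ht₀ ht₁ (one_div_pos.2 (ha 0)).le
    have hA : ∀ i, 0 < Fin.tail a i := fun i => ha i.succ
    have hle : ∀ x, 0 < x → (t / x ^ a 0 ≤ 1 ↔ s ≤ x) := fun x hx => by
      rw [div_le_one (Real.rpow_pos_of_pos hx _), ← Real.rpow_le_rpow_iff hs₀.le hx.le (ha 0),
        ← Real.rpow_mul ht₀, one_div_mul_cancel (ha 0).ne', Real.rpow_one]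
    have hlow : ∫⁻ x in Set.Ioc 0 s, volume (cubeSublevel (Fin.tail a) (t / x ^ a 0))
        = ENNReal.ofReal s := by
      rw [Measure.restrict_congr_set Ioo_ae_eq_Ioc.symm, setLIntegral_congr_fun measurableSet_Ioo
        (g := fun _ => 1) fun x hx => ?_, setLIntegral_one, Real.volume_Ioo, sub_zero]
      rw [cubeSublevel_of_one_lt (fun i => (hA i).le)
        (not_le.1 ((hle x hx.1).not.2 (not_le.2 hx.2))), volume_unitCube]
    have hsplit : volume (cubeSublevel a t) = ENNReal.ofReal s
        + ∫⁻ x in Set.Ioc s 1, volume (cubeSublevel (Fin.tail a) (t / x ^ a 0)) := by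
      rw [volume_cubeSublevel_succ, ← Set.Ioc_union_Ioc_eq_Ioc hs₀.le hs₁,
        lintegral_union measurableSet_Ioc (Set.Ioc_disjoint_Ioc_of_le le_rfl), hlow]
    have hfin := hsplit ▸ ((volume_cubeSublevel_le_one a t).trans_lt ENNReal.one_lt_top).ne
    rw [hsplit, ENNReal.toReal_add ENNReal.ofReal_ne_top (ENNReal.add_ne_top.1 hfin).2,
      ENNReal.toReal_ofReal hs₀.le, toReal_setLIntegral_volume_cubeSublevel _ _
        (φ := fun x => t / x ^ a 0) (measurable_const.div (measurable_id.pow_const _)),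
      lagrangeRpowSum_succ ha hinj ht, intervalIntegral.integral_of_le hs₁]
    refine congrArg _ (setIntegral_congr_fun measurableSet_Ioc fun x hx => ?_)
    have hx₀ : 0 < x := hs₀.trans hx.1
    exact ih hA (fun i j h => Fin.succ_injective _ (hinj h))
      (div_nonneg ht₀ (Real.rpow_nonneg hx₀.le _)) ((hle x hx₀).2 hx.1.le)

section

variable {ι κ : Type*} [Fintype ι] [Fintype κ]

theorem integral_unitCube_prod_rpow_s14 {c : ι → ℝ} (hc : ∀ i, -1 < c i) :
    ∫ x in unitCube ι, ∏ i, x i ^ c i = ∏ i, 1 / (c i + 1) := by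
  rw [unitCube_eq_pi, volume_pi, Measure.restrict_pi_pi,
    integral_fintype_prod_eq_prod (f := fun i y => y ^ c i)]
  refine prod_congr rfl fun i _ => ?_
  rw [integral_Icc_eq_integral_Ioc, ← intervalIntegral.integral_of_le zero_le_one,
    integral_rpow (Or.inl (hc i)), Real.one_rpow, Real.zero_rpow (by linarith [hc i]), sub_zero]

theorem integral_unitCube_prod_rpow_rpow {b : ι → ℝ} {r : ℝ} (h : ∀ i, -1 < b i * r) :
    ∫ x in unitCube ι, (∏ i, x i ^ b i) ^ r = ∏ i, 1 / (b i * r + 1) := by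
  rw [← integral_unitCube_prod_rpow_s14 h]
  refine setIntegral_congr_fun measurableSet_unitCube fun x hx => ?_
  rw [← Real.finsetProd_rpow _ _ fun i _ => Real.rpow_nonneg (hx i).1 _]
  exact prod_congr rfl fun i _ => (Real.rpow_mul (hx i).1 _ _).symm

theorem volume_setOf_prod_rpow_lt_prod_rpow (a : ι → ℝ) (b : κ → ℝ) :
    volume {z : (ι → ℝ) × (κ → ℝ) |
      z.1 ∈ unitCube ι ∧ z.2 ∈ unitCube κ ∧ ∏ i, z.1 i ^ a i < ∏ j, z.2 j ^ b j}
      = ∫⁻ y in unitCube κ, volume (cubeSublevel a (∏ j, y j ^ b j)) := by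
  have hS : MeasurableSet {z : (ι → ℝ) × (κ → ℝ) |
      z.1 ∈ unitCube ι ∧ z.2 ∈ unitCube κ ∧ ∏ i, z.1 i ^ a i < ∏ j, z.2 j ^ b j} :=
    (measurableSet_unitCube.preimage measurable_fst).inter
    ((measurableSet_unitCube.preimage measurable_snd).inter (measurableSet_lt
      ((measurable_prod_rpow a).comp measurable_fst) ((measurable_prod_rpow b).comp measurable_snd)))
  rw [Measure.volume_eq_prod, Measure.prod_apply_symm hS,
    ← lintegral_indicator measurableSet_unitCube]
  refine lintegral_congr fun y => ?_
  by_cases hy : y ∈ unitCube κ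
  · simp [hy, cubeSublevel]
  · simp [hy]

end

/-- for pairwise distinct positive `a₁,…,aₘ` and positive `b₁,…,bₙ`,
`f(a₁,…,aₘ; b₁,…,bₙ) = Σᵢ (∏_{k≠i} aᵢ/(aᵢ − aₖ)) · (∏ⱼ aᵢ/(aᵢ + bⱼ))`. -/
theorem stmt14 (m n : ℕ) (a : Fin m → ℝ) (b : Fin n → ℝ)
    (ha : ∀ i, 0 < a i) (hb : ∀ j, 0 < b j) (hdist : Function.Injective a) :
    hypervolume m n a b
      = ∑ i, (∏ k ∈ Finset.univ.erase i, a i / (a i - a k)) * ∏ j, a i / (a i + b j) := by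
  set P := fun y : Fin n → ℝ => ∏ j, y j ^ b j
  have hb₀ : ∀ j, 0 ≤ b j := fun j => (hb j).le
  have hP : ∀ y ∈ unitCube (Fin n), 0 ≤ P y ∧ P y ≤ 1 := fun y hy =>
    ⟨prod_rpow_nonneg_of_mem_unitCube hy b, prod_rpow_le_one_of_mem_unitCube hy hb₀⟩
  have hint : ∀ i, IntegrableOn (fun y => P y ^ (1 / a i)) (unitCube (Fin n)) :=
    fun i => ((continuous_prod_rpow hb₀).rpow_const fun _ =>
      Or.inr (one_div_pos.2 (ha i)).le).continuousOn.integrableOn_compact isCompact_unitCube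
  calc hypervolume m n a b
      = (∫⁻ y in unitCube (Fin n), volume (cubeSublevel a (P y))).toReal :=
        congrArg ENNReal.toReal (volume_setOf_prod_rpow_lt_prod_rpow a b)
    _ = ∫ y in unitCube (Fin n), lagrangeRpowSum a (P y) := by
        rw [toReal_setLIntegral_volume_cubeSublevel a _ (measurable_prod_rpow b)]
        exact setIntegral_congr_fun measurableSet_unitCube fun y hy =>
          toReal_volume_cubeSublevel ha hdist (hP y hy).1 (hP y hy).2
    _ = ∑ i, lagrangeWeight a i * ∫ y in unitCube (Fin n), P y ^ (1 / a i) := by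
        simp only [lagrangeRpowSum]
        rw [integral_finsetSum _ fun i _ => (hint i).const_mul _]
        simp only [integral_const_mul]
    _ = _ := by
        refine sum_congr rfl fun i _ => ?_
        rw [integral_unitCube_prod_rpow_rpow fun j =>
          neg_one_lt_zero.trans_le (mul_nonneg (hb₀ j) (one_div_pos.2 (ha i)).le)]
        refine congrArg _ (prod_congr rfl fun j _ => ?_)
        field_simp [(ha i).ne']
        ring
end

section
/- For positive integers m and n, the Lebesgue measure of the set {(x,y) ∈ [0,1]ᵐ × [0,1]ⁿ : x₁x₂⋯xₘ < y₁y₂⋯yₙ} equals Σ_{i=0}^{m−1} C(n+i−1, i) · 2^{−(n+i)}, where C denotes the binomial coefficient. -/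
/-!
Write `H k l r` for `volume (prodLtSet k l r)`, the volume of
`{(x, y) ∈ [0,1]ᵏ × [0,1]ˡ : ∏ x < r ∏ y}`. Integrating out one coordinate gives
`H (k+1) l r = ∫₀¹ H k l (r / t) dt` and `H k (l+1) r = ∫₀¹ H k l (r t) dt`, so
`H (k+1) (l+1) 1 = ∫₀¹ ∫₀¹ H k l (b / a) db da`. Cutting the unit square along its diagonal and
rescaling each triangle to the unit interval turns this into
`H (k+1) (l+1) 1 = ½ H k (l+1) 1 + ½ H (k+1) l 1`. With `H 0 l 1 = 0` and `H (k+1) 0 1 = 1`, this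
is the recurrence of the probability that `n` heads come up before `m` tails in fair coin tosses,
which is the stated sum.
-/

open scoped ENNReal

open MeasureTheory Finset

lemma volume_eq_lintegral_volume_cons_slice {β α : Type*} [MeasureSpace β] [MeasureSpace α]
    [SigmaFinite (volume : Measure β)] [SigmaFinite (volume : Measure α)] {k : ℕ}
    {S : Set ((Fin (k + 1) → β) × α)} (hS : MeasurableSet S) :
    volume S = ∫⁻ t : β, volume {w : (Fin k → β) × α | (Fin.cons t w.1, w.2) ∈ S} := by
  let e : ((Fin (k + 1) → β) × α) ≃ᵐ β × ((Fin k → β) × α) :=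
    ((MeasurableEquiv.piFinSuccAbove (fun _ => β) 0).prodCongr (MeasurableEquiv.refl α)).trans
      MeasurableEquiv.prodAssoc
  have he : MeasurePreserving e volume volume :=
    (volume_preserving_prodAssoc ..).comp
      ((volume_preserving_piFinSuccAbove (fun _ => β) 0).prod (MeasurePreserving.id volume))
  rw [← he.symm.measure_preimage hS.nullMeasurableSet, Measure.volume_eq_prod,
    Measure.prod_apply (hS.preimage e.symm.measurable)]
  congr! with t
  ext w
  simp only [e, MeasurableEquiv.piFinSuccAbove, Fin.insertNthEquiv, Fin.insertNth_zero']
  rfl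

lemma volume_eq_lintegral_volume_cons_slice_snd {α β : Type*} [MeasureSpace α] [MeasureSpace β]
    [SigmaFinite (volume : Measure α)] [SigmaFinite (volume : Measure β)] {k : ℕ}
    {S : Set (α × (Fin (k + 1) → β))} (hS : MeasurableSet S) :
    volume S = ∫⁻ t : β, volume {w : α × (Fin k → β) | (w.1, Fin.cons t w.2) ∈ S} := by
  have hswap {n : ℕ} (s : Set (α × (Fin n → β))) :
      volume (MeasurableEquiv.prodComm ⁻¹' s : Set ((Fin n → β) × α)) = volume s := by
    rw [Measure.volume_eq_prod, Measure.volume_eq_prod]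
    exact Measure.measurePreserving_swap.measure_preimage_equiv s
  rw [← hswap S,
    volume_eq_lintegral_volume_cons_slice (hS.preimage MeasurableEquiv.prodComm.measurable)]
  simp_rw [← hswap {w : α × (Fin k → β) | (w.1, Fin.cons _ w.2) ∈ S}]
  rfl

def prodLtSet (k l : ℕ) (r : ℝ) : Set ((Fin k → ℝ) × (Fin l → ℝ)) :=
  {z | (∀ i, z.1 i ∈ Set.Icc (0 : ℝ) 1) ∧ (∀ j, z.2 j ∈ Set.Icc (0 : ℝ) 1) ∧
    ∏ i, z.1 i < r * ∏ j, z.2 j}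

lemma measurableSet_prodLtSet (k l : ℕ) (r : ℝ) : MeasurableSet (prodLtSet k l r) := by
  simp only [prodLtSet, Set.ofPred_and, Set.ofPred_forall]
  refine .inter (.iInter fun i => ?_) (.inter (.iInter fun j => ?_) ?_)
  · exact measurableSet_Icc.preimage (by fun_prop)
  · exact measurableSet_Icc.preimage (by fun_prop)
  · exact measurableSet_lt (by fun_prop) (by fun_prop)

lemma monotone_volume_prodLtSet (k l : ℕ) : Monotone fun r => volume (prodLtSet k l r) :=
  fun _ _ hr => measure_mono fun _ ⟨hx, hy, hlt⟩ =>
    ⟨hx, hy, hlt.trans_le (mul_le_mul_of_nonneg_right hr (prod_nonneg fun j _ => (hy j).1))⟩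

lemma volume_prodLtSet_succ_left (k l : ℕ) (r : ℝ) :
    volume (prodLtSet (k + 1) l r) = ∫⁻ t in Set.Ioo 0 1, volume (prodLtSet k l (r / t)) := by
  rw [volume_eq_lintegral_volume_cons_slice (measurableSet_prodLtSet _ _ _),
    ← setLIntegral_eq_of_support_subset (s := Set.Icc 0 1), setLIntegral_congr Ioo_ae_eq_Icc.symm]
  · refine setLIntegral_congr_fun measurableSet_Ioo fun t ht => ?_
    congr 1
    ext w
    simp only [prodLtSet, Set.mem_ofPred_eq, Fin.forall_fin_succ, Fin.cons_zero, Fin.cons_succ,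
      Fin.prod_univ_succ, Set.Ioo_subset_Icc_self ht, true_and]
    rw [div_mul_eq_mul_div, lt_div_iff₀ ht.1, mul_comm]
  · refine Function.support_subset_iff'.2 fun t ht => measure_eq_zero_iff_ae_notMem.2 ?_
    exact .of_forall fun w hw => ht (by simpa [prodLtSet, Fin.forall_fin_succ] using hw.1 0)

lemma volume_prodLtSet_succ_right (k l : ℕ) (r : ℝ) :
    volume (prodLtSet k (l + 1) r) = ∫⁻ t in Set.Ioo 0 1, volume (prodLtSet k l (r * t)) := by
  rw [volume_eq_lintegral_volume_cons_slice_snd (measurableSet_prodLtSet _ _ _),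
    ← setLIntegral_eq_of_support_subset (s := Set.Icc 0 1), setLIntegral_congr Ioo_ae_eq_Icc.symm]
  · refine setLIntegral_congr_fun measurableSet_Ioo fun t ht => ?_
    congr 1
    ext w
    simp only [prodLtSet, Set.mem_ofPred_eq, Fin.forall_fin_succ, Fin.cons_zero, Fin.cons_succ,
      Fin.prod_univ_succ, Set.Ioo_subset_Icc_self ht, true_and, mul_assoc]
  · refine Function.support_subset_iff'.2 fun t ht => measure_eq_zero_iff_ae_notMem.2 ?_
    exact .of_forall fun w hw => ht (by simpa [prodLtSet, Fin.forall_fin_succ] using hw.2.1 0)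

lemma setLIntegral_Ioo_comp_div (g : ℝ → ℝ≥0∞) {a : ℝ} (ha : 0 < a) :
    ∫⁻ b in Set.Ioo 0 a, g (b / a) = ENNReal.ofReal a * ∫⁻ u in Set.Ioo 0 1, g u := by
  have himage : (a * ·) '' Set.Ioo (0 : ℝ) 1 = Set.Ioo 0 a := by
    rw [Set.image_mul_left_Ioo ha, mul_zero, mul_one]
  have hderiv (u : ℝ) : HasDerivWithinAt (a * ·) a (Set.Ioo 0 1) u := by
    simpa using ((hasDerivAt_id u).const_mul a).hasDerivWithinAt
  have hmono : MonotoneOn (a * ·) (Set.Ioo (0 : ℝ) 1) :=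
    fun x _ y _ hxy => mul_le_mul_of_nonneg_left hxy ha.le
  rw [← himage, lintegral_image_eq_lintegral_deriv_mul_of_monotoneOn measurableSet_Ioo
    (fun u _ => hderiv u) hmono, ← lintegral_const_mul' _ _ ENNReal.ofReal_ne_top]
  refine setLIntegral_congr_fun measurableSet_Ioo fun u _ => ?_
  rw [mul_div_cancel_left₀ u ha.ne']

lemma lintegral_Ioo_ofReal : ∫⁻ a in Set.Ioo (0 : ℝ) 1, ENNReal.ofReal a = 2⁻¹ := by
  rw [← ofReal_integral_eq_lintegral_ofReal]
  · rw [← integral_Ioc_eq_integral_Ioo, ← intervalIntegral.integral_of_le zero_le_one]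
    norm_num
    rw [one_div, ENNReal.ofReal_inv_of_pos two_pos, ENNReal.ofReal_ofNat]
  · exact (continuous_id.integrableOn_Icc).mono_set Set.Ioo_subset_Icc_self
  · exact (ae_restrict_mem measurableSet_Ioo).mono fun x hx => hx.1.le

lemma lintegral_Ioo_lintegral_Ioo_comp_div {g : ℝ → ℝ≥0∞} (hg : Measurable g) :
    ∫⁻ a in Set.Ioo 0 1, ∫⁻ b in Set.Ioo 0 1, g (b / a)
      = 2⁻¹ * (∫⁻ u in Set.Ioo 0 1, g u) + 2⁻¹ * ∫⁻ u in Set.Ioo 0 1, g u⁻¹ := by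
  set s := Set.Ioo (0 : ℝ) 1
  set G : ℝ × ℝ → ℝ≥0∞ := fun p => g (p.2 / p.1)
  have hG : Measurable G := by fun_prop
  set below := {p : ℝ × ℝ | p.2 < p.1}
  set above := {p : ℝ × ℝ | p.1 ≤ p.2}
  have hbelow : MeasurableSet below := measurableSet_lt measurable_snd measurable_fst
  have habove : MeasurableSet above := measurableSet_le measurable_fst measurable_snd
  have hsplit (a b : ℝ) : g (b / a) = below.indicator G (a, b) + above.indicator G (a, b) := by
    by_cases h : b < a
    · simp [below, above, G, h, not_le.2 h]
    · simp [below, above, G, h, not_lt.1 h]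
  have hlow (a : ℝ) (ha : a ∈ s) :
      ∫⁻ b in s, below.indicator G (a, b) = ENNReal.ofReal a * ∫⁻ u in s, g u := by
    change ∫⁻ b in s, (Set.Iio a).indicator (fun b => g (b / a)) b = _
    rw [lintegral_indicator measurableSet_Iio, Measure.restrict_restrict measurableSet_Iio,
      Set.Iio_inter_Ioo, min_eq_left ha.2.le, setLIntegral_Ioo_comp_div g ha.1]
  have hhigh (b : ℝ) (hb : b ∈ s) :
      ∫⁻ a in s, above.indicator G (a, b) = ENNReal.ofReal b * ∫⁻ u in s, g u⁻¹ := by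
    change ∫⁻ a in s, (Set.Iic b).indicator (fun a => g (b / a)) a = _
    have hinter : Set.Iic b ∩ s = Set.Ioc 0 b := by
      ext a
      simp only [s, Set.mem_inter_iff, Set.mem_Iic, Set.mem_Ioo, Set.mem_Ioc]
      constructor
      · exact fun ⟨hab, ha, _⟩ => ⟨ha, hab⟩
      · exact fun ⟨ha, hab⟩ => ⟨hab, ha, hab.trans_lt hb.2⟩
    rw [lintegral_indicator measurableSet_Iic, Measure.restrict_restrict measurableSet_Iic, hinter,
      ← setLIntegral_congr Ioo_ae_eq_Ioc, ← setLIntegral_Ioo_comp_div (fun u => g u⁻¹) hb.1]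
    simp_rw [inv_div]
  calc ∫⁻ a in s, ∫⁻ b in s, g (b / a)
      = (∫⁻ a in s, ∫⁻ b in s, below.indicator G (a, b))
          + ∫⁻ a in s, ∫⁻ b in s, above.indicator G (a, b) := by
        simp_rw [hsplit]
        rw [← lintegral_add_left (hG.indicator hbelow).lintegral_prod_right']
        exact lintegral_congr fun a => lintegral_add_left (by fun_prop) _
    _ = (∫⁻ a in s, ∫⁻ b in s, below.indicator G (a, b))
          + ∫⁻ b in s, ∫⁻ a in s, above.indicator G (a, b) := by
        rw [lintegral_lintegral_swap (f := fun a b => above.indicator G (a, b))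
          (hG.indicator habove).aemeasurable]
    _ = (∫⁻ a in s, ENNReal.ofReal a * ∫⁻ u in s, g u)
          + ∫⁻ b in s, ENNReal.ofReal b * ∫⁻ u in s, g u⁻¹ := by
        rw [setLIntegral_congr_fun measurableSet_Ioo hlow,
          setLIntegral_congr_fun measurableSet_Ioo hhigh]
    _ = _ := by
        rw [lintegral_mul_const _ ENNReal.measurable_ofReal,
          lintegral_mul_const _ ENNReal.measurable_ofReal, lintegral_Ioo_ofReal]

/-- The probability that `n` heads come up before `m` tails in fair coin tosses: the `n`-th head
is toss `n + i`, preceded by `i < m` tails. For `n = 0` the truncated `n + i - 1` makes the sum `1`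
(when `m > 0`), as it should. -/
noncomputable def headsFirstProb (m n : ℕ) : ℝ≥0∞ :=
  ∑ i ∈ range m, ((n + i - 1).choose i : ℝ≥0∞) * 2⁻¹ ^ (n + i)

lemma headsFirstProb_succ_zero (m : ℕ) : headsFirstProb (m + 1) 0 = 1 := by
  rw [headsFirstProb, sum_range_succ', sum_eq_zero fun i _ => ?_] <;> simp

lemma headsFirstProb_succ_succ (m n : ℕ) :
    headsFirstProb (m + 1) (n + 1)
      = 2⁻¹ * headsFirstProb m (n + 1) + 2⁻¹ * headsFirstProb (m + 1) n := by
  simp only [headsFirstProb, mul_sum]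
  rw [sum_range_succ' _ m, sum_range_succ' (fun i => 2⁻¹ * (((n + i - 1).choose i : ℝ≥0∞) * _)) m,
    ← add_assoc, ← sum_add_distrib]
  congr 1
  · refine sum_congr rfl fun i _ => ?_
    simp only [show n + 1 + (i + 1) - 1 = n + i + 1 by omega, show n + 1 + i - 1 = n + i by omega,
      show n + (i + 1) - 1 = n + i by omega, Nat.choose_succ_succ, Nat.cast_add]
    ring
  · simp [pow_succ, mul_comm]

lemma volume_prodLtSet_succ_succ (k l : ℕ) :
    volume (prodLtSet (k + 1) (l + 1) 1)
      = 2⁻¹ * volume (prodLtSet k (l + 1) 1) + 2⁻¹ * volume (prodLtSet (k + 1) l 1) := by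
  have hmeas : Measurable fun r => volume (prodLtSet k l r) :=
    (monotone_volume_prodLtSet k l).measurable
  calc volume (prodLtSet (k + 1) (l + 1) 1)
      = ∫⁻ a in Set.Ioo 0 1, ∫⁻ b in Set.Ioo 0 1, volume (prodLtSet k l (b / a)) := by
        rw [volume_prodLtSet_succ_left]
        refine setLIntegral_congr_fun measurableSet_Ioo fun a _ => ?_
        simp_rw [volume_prodLtSet_succ_right, one_div_mul_eq_div]
    _ = _ := by
        rw [lintegral_Ioo_lintegral_Ioo_comp_div hmeas, volume_prodLtSet_succ_right,
          volume_prodLtSet_succ_left]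
        simp only [one_mul, one_div]

lemma volume_prodLtSet_zero_left (l : ℕ) : volume (prodLtSet 0 l 1) = 0 := by
  refine measure_eq_zero_iff_ae_notMem.2 (.of_forall fun z ⟨_, hy, hlt⟩ => ?_)
  have : ∏ j, z.2 j ≤ 1 := prod_le_one (fun j _ => (hy j).1) (fun j _ => (hy j).2)
  simp only [univ_eq_empty, prod_empty, one_mul] at hlt
  exact hlt.not_ge this

lemma volume_prodLtSet_zero_right {r : ℝ} (hr : 1 < r) (k : ℕ) :
    volume (prodLtSet k 0 r) = 1 := by
  induction k generalizing r with
  | zero =>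
    have : prodLtSet 0 0 r = Set.univ := by simp [prodLtSet, hr]
    rw [this, ← Set.univ_prod_univ, Measure.volume_eq_prod, Measure.prod_prod]
    simp [volume_pi]
  | succ k ih =>
    rw [volume_prodLtSet_succ_left, setLIntegral_congr_fun measurableSet_Ioo
      fun t ht => ih ((one_lt_div ht.1).2 (ht.2.trans hr))]
    simp

lemma volume_prodLtSet_succ_zero (k : ℕ) : volume (prodLtSet (k + 1) 0 1) = 1 := by
  rw [volume_prodLtSet_succ_left, setLIntegral_congr_fun measurableSet_Ioo
    fun t ht => volume_prodLtSet_zero_right ((one_lt_div ht.1).2 ht.2) k]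
  simp

theorem volume_prodLtSet_one (m n : ℕ) : volume (prodLtSet m n 1) = headsFirstProb m n := by
  induction m generalizing n with
  | zero => simp [volume_prodLtSet_zero_left, headsFirstProb]
  | succ m ih =>
    induction n with
    | zero => rw [volume_prodLtSet_succ_zero, headsFirstProb_succ_zero]
    | succ n ihn => rw [volume_prodLtSet_succ_succ, ih, ihn, headsFirstProb_succ_succ]

theorem stmt15_general (m n : ℕ) :
    (volume {z : (Fin m → ℝ) × (Fin n → ℝ) |
        (∀ i, z.1 i ∈ Set.Icc (0 : ℝ) 1) ∧ (∀ j, z.2 j ∈ Set.Icc (0 : ℝ) 1) ∧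
        ∏ i, z.1 i < ∏ j, z.2 j}).toReal
      = ∑ i ∈ Finset.range m, ((n + i - 1).choose i : ℝ) / 2 ^ (n + i) := by
  calc _ = (headsFirstProb m n).toReal := by
        rw [← volume_prodLtSet_one]
        simp only [prodLtSet, one_mul]
    _ = _ := by
        rw [headsFirstProb, ENNReal.toReal_sum fun i _ => by finiteness]
        refine sum_congr rfl fun i _ => ?_
        simp [div_eq_mul_inv]

/-- for positive integers `m, n`, the Lebesgue measure of
`{(x,y) ∈ [0,1]ᵐ × [0,1]ⁿ : x₁⋯xₘ < y₁⋯yₙ}` equals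
`Σ_{i=0}^{m−1} C(n+i−1, i) · 2^{−(n+i)}`. -/
theorem stmt15 (m n : ℕ) (hm : 0 < m) (hn : 0 < n) :
    (volume {z : (Fin m → ℝ) × (Fin n → ℝ) |
        (∀ i, z.1 i ∈ Set.Icc (0 : ℝ) 1) ∧ (∀ j, z.2 j ∈ Set.Icc (0 : ℝ) 1) ∧
        ∏ i, z.1 i < ∏ j, z.2 j}).toReal
      = ∑ i ∈ Finset.range m, ((n + i - 1).choose i : ℝ) / 2 ^ (n + i) :=
  stmt15_general m n
end
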